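/- arXiv:2503.12477 — 10 statements merged into one kernel-verified Lean document; each statement's English description precedes it below -/
import Mathlib

section
/- Let v₁,v₂,v₃,v₄ and w₁,w₂,w₃,w₄ be unit vectors in ℝ² and let λ₁,λ₂,λ₃,λ₄ ∈ (0,1). Suppose v₁,v₂,v₃,v₄ occur in this order as one moves around the unit circle in the clockwise direction (i.e., there exist real numbers θ₁ > θ₂ > θ₃ > θ₄ > θ₁ − 2π with vᵢ = (cos θᵢ, sin θᵢ) for i = 1,2,3,4), while w₁,w₂,w₃,w₄ occur in this order in the counterclockwise direction (i.e., there exist real numbers φ₁ < φ₂ < φ₃ < φ₄ < φ₁ + 2π with wᵢ = (cos φᵢ, sin φᵢ)). Assume λ₁+λ₂+λ₃+λ₄ = 1 and λ₁v₁+λ₂v₂+λ₃v₃+λ₄v₄ = 0 = λ₁w₁+λ₂w₂+λ₃w₃+λ₄w₄. Then there exists a subset A ⊆ {1,2,3,4} with exactly three elements such that the origin of ℝ² belongs both to the convex hull of {vᵢ : i ∈ A} and to the convex hull of {wᵢ : i ∈ A}. -/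
open Real



lemma gapBound (a1 a2 a3 a4 m1 m2 m3 m4 : ℝ)
    (hm1 : 0 < m1) (hm2 : 0 < m2) (hm3 : 0 < m3) (hm4 : 0 < m4)
    (h12 : a1 < a2) (h23 : a2 < a3) (h34 : a3 < a4) (h41 : a4 < a1 + 2 * π)
    (heq : ∀ ψ : ℝ, m1 * Real.cos (a1 - ψ) + m2 * Real.cos (a2 - ψ)
      + m3 * Real.cos (a3 - ψ) + m4 * Real.cos (a4 - ψ) = 0) :
    a2 - a1 < π := by
  by_contra hge
  push_neg at hge
  have hpi := Real.pi_pos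
  set ψ := (a1 + a2) / 2 + π with hψ
  have ha2 : a2 < a1 + 2 * π := by linarith
  have h1 : 0 ≤ Real.cos (a1 - ψ) := by
    rw [← Real.cos_add_two_pi]
    apply Real.cos_nonneg_of_mem_Icc
    simp only [Set.mem_Icc]; constructor <;> linarith
  have h2 : 0 ≤ Real.cos (a2 - ψ) := by
    apply Real.cos_nonneg_of_mem_Icc
    simp only [Set.mem_Icc]; constructor <;> linarith
  have h3 : 0 < Real.cos (a3 - ψ) := by
    apply Real.cos_pos_of_mem_Ioo
    simp only [Set.mem_Ioo]; constructor <;> linarith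
  have h4 : 0 < Real.cos (a4 - ψ) := by
    apply Real.cos_pos_of_mem_Ioo
    simp only [Set.mem_Ioo]; constructor <;> linarith
  nlinarith [heq ψ, mul_pos hm3 h3, mul_pos hm4 h4,
    mul_nonneg hm1.le h1, mul_nonneg hm2.le h2]

lemma squeeze (a1 a2 a3 a4 m1 m2 m3 m4 : ℝ)
    (hm1 : 0 < m1) (hm2 : 0 < m2) (hm3 : 0 < m3) (hm4 : 0 < m4)
    (h12 : a1 < a2) (h23 : a2 < a3) (h34 : a3 < a4)
    (h31 : a3 - a1 < π) (h42 : a4 - a2 < π)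
    (heq : ∀ ψ : ℝ, m1 * Real.cos (a1 - ψ) + m2 * Real.cos (a2 - ψ)
      + m3 * Real.cos (a3 - ψ) + m4 * Real.cos (a4 - ψ) = 0) :
    m2 + m3 < m1 + m4 := by
  have hpi := Real.pi_pos
  set ψ := (a2 + a3) / 2 with hψ
  set δ := (a3 - a2) / 2 with hδ
  have hδ0 : 0 ≤ δ := by linarith
  have hδπ : δ < π / 2 := by linarith
  have hcδ : 0 < Real.cos δ := Real.cos_pos_of_mem_Ioo ⟨by linarith, hδπ⟩
  have h2 : Real.cos (a2 - ψ) = Real.cos δ := by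
    rw [show a2 - ψ = -δ by simp only [hψ, hδ]; ring, Real.cos_neg]
  have h3 : Real.cos (a3 - ψ) = Real.cos δ := by
    rw [show a3 - ψ = δ by simp only [hψ, hδ]; ring]
  -- cos is strictly anti on [0, π]
  have key : ∀ x : ℝ, 0 < x → x < π - δ → -Real.cos δ < Real.cos x := by
    intro x hx0 hxu
    have := Real.cos_lt_cos_of_nonneg_of_le_pi (x := x) (y := π - δ)
      (by linarith) (by linarith) hxu
    rwa [Real.cos_pi_sub] at this
  have h1 : -Real.cos δ < Real.cos (a1 - ψ) := by
    rw [show a1 - ψ = -(ψ - a1) by ring, Real.cos_neg]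
    apply key
    · linarith
    · linarith
  have h4 : -Real.cos δ < Real.cos (a4 - ψ) := by
    apply key
    · linarith
    · linarith
  nlinarith [heq ψ, mul_lt_mul_of_pos_left h1 hm1, mul_lt_mul_of_pos_left h4 hm4]

lemma mem_hull (f : Fin 4 → ℝ × ℝ) (A : Finset (Fin 4)) (c : Fin 4 → ℝ)
    (hc : ∀ i ∈ A, 0 ≤ c i) (hs : 0 < ∑ i ∈ A, c i)
    (hz : ∑ i ∈ A, c i • f i = 0) :
    (0 : ℝ × ℝ) ∈ convexHull ℝ (f '' (A : Set (Fin 4))) := by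
  have := A.centerMass_mem_convexHull (w := c) hc hs (z := f)
    (fun i hi => Set.mem_image_of_mem f hi)
  rwa [Finset.centerMass, hz, smul_zero] at this

lemma tri (f : Fin 4 → ℝ × ℝ) (i j k : Fin 4) (a b c : ℝ)
    (hij : i ≠ j) (hik : i ≠ k) (hjk : j ≠ k)
    (hfi : f i = (Real.cos a, Real.sin a)) (hfj : f j = (Real.cos b, Real.sin b))
    (hfk : f k = (Real.cos c, Real.sin c))
    (hab : a < b) (hbc : b < c) (hba : b - a ≤ π) (hcb : c - b ≤ π)
    (hca : π ≤ c - a) (hca2 : c - a < 2 * π) :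
    (0 : ℝ × ℝ) ∈ convexHull ℝ (f '' (({i, j, k} : Finset (Fin 4)) : Set (Fin 4))) := by
  have hpi := Real.pi_pos
  set k1 := Real.sin (c - b) with hk1
  set k2 := -Real.sin (c - a) with hk2
  set k3 := Real.sin (b - a) with hk3
  have hk1n : 0 ≤ k1 := Real.sin_nonneg_of_nonneg_of_le_pi (by linarith) hcb
  have hk3n : 0 ≤ k3 := Real.sin_nonneg_of_nonneg_of_le_pi (by linarith) hba
  have hk2n : 0 ≤ k2 := by
    have h := Real.sin_nonneg_of_nonneg_of_le_pi (x := c - a - π) (by linarith) (by linarith)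
    rw [Real.sin_sub_pi] at h
    simpa [hk2] using h
  have hposs : 0 < k1 + k2 + k3 := by
    rcases lt_or_eq_of_le hba with h | h
    · have : 0 < k3 := Real.sin_pos_of_pos_of_lt_pi (by linarith) h
      linarith
    · have : 0 < k1 := Real.sin_pos_of_pos_of_lt_pi (by linarith) (by linarith)
      linarith
  set cf : Fin 4 → ℝ := fun t => if t = i then k1 else if t = j then k2 else if t = k then k3 else 0
    with hcf
  have hcfi : cf i = k1 := by simp [hcf]
  have hcfj : cf j = k2 := by simp [hcf, hij.symm]
  have hcfk : cf k = k3 := by simp [hcf, hik.symm, hjk.symm]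
  have hjm : j ∉ ({k} : Finset (Fin 4)) := by simp [hjk]
  have him : i ∉ ({j, k} : Finset (Fin 4)) := by simp [hij, hik]
  apply mem_hull f _ cf
  · intro t ht
    simp only [hcf]
    split_ifs <;> [exact hk1n; exact hk2n; exact hk3n; exact le_refl 0]
  · rw [Finset.sum_insert him, Finset.sum_insert hjm, Finset.sum_singleton, hcfi, hcfj, hcfk]
    linarith
  · rw [Finset.sum_insert him, Finset.sum_insert hjm, Finset.sum_singleton, hcfi, hcfj, hcfk,
      hfi, hfj, hfk]
    rw [Prod.ext_iff]
    constructor <;>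
      simp only [hk1, hk2, hk3, Prod.smul_mk, Prod.mk_add_mk, smul_eq_mul, Real.sin_sub,
        Real.cos_sub, Prod.fst_zero, Prod.snd_zero] <;> ring

/-- **Convex geometry lemma (Lemma 1.8).** If unit vectors `v₁,…,v₄` occur in clockwise
order on the unit circle while `w₁,…,w₄` occur in counterclockwise order, and
`∑ λᵢ vᵢ = 0 = ∑ λᵢ wᵢ` for weights `λᵢ ∈ (0,1)` summing to one, then some three of the
indices give triangles (convex hulls) containing the origin simultaneously for the `v`'s
and for the `w`'s. -/
theorem stmt_0 (v w : Fin 4 → ℝ × ℝ) (lam : Fin 4 → ℝ)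
    (hlam : ∀ i, lam i ∈ Set.Ioo (0 : ℝ) 1)
    (θ : Fin 4 → ℝ)
    (hθ : θ 0 > θ 1 ∧ θ 1 > θ 2 ∧ θ 2 > θ 3 ∧ θ 3 > θ 0 - 2 * π)
    (hv : ∀ i, v i = (Real.cos (θ i), Real.sin (θ i)))
    (φ : Fin 4 → ℝ)
    (hφ : φ 0 < φ 1 ∧ φ 1 < φ 2 ∧ φ 2 < φ 3 ∧ φ 3 < φ 0 + 2 * π)
    (hw : ∀ i, w i = (Real.cos (φ i), Real.sin (φ i)))
    (hsum : lam 0 + lam 1 + lam 2 + lam 3 = 1)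
    (hv0 : lam 0 • v 0 + lam 1 • v 1 + lam 2 • v 2 + lam 3 • v 3 = 0)
    (hw0 : lam 0 • w 0 + lam 1 • w 1 + lam 2 • w 2 + lam 3 • w 3 = 0) :
    ∃ A : Finset (Fin 4), A.card = 3 ∧
      (0 : ℝ × ℝ) ∈ convexHull ℝ (v '' (A : Set (Fin 4))) ∧
      (0 : ℝ × ℝ) ∈ convexHull ℝ (w '' (A : Set (Fin 4))) := by
  obtain ⟨t01, t12, t23, t30⟩ := hθ
  obtain ⟨q01, q12, q23, q30⟩ := hφ
  have l0 := (hlam 0).1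
  have l1 := (hlam 1).1
  have l2 := (hlam 2).1
  have l3 := (hlam 3).1
  have hpi := Real.pi_pos
  -- component equations
  rw [hv 0, hv 1, hv 2, hv 3, Prod.ext_iff] at hv0
  rw [hw 0, hw 1, hw 2, hw 3, Prod.ext_iff] at hw0
  simp only [Prod.smul_mk, Prod.mk_add_mk, smul_eq_mul, Prod.fst_zero, Prod.snd_zero] at hv0 hw0
  obtain ⟨hvx, hvy⟩ := hv0
  obtain ⟨hwx, hwy⟩ := hw0
  have Ev : ∀ ψ : ℝ, lam 0 * Real.cos (θ 0 - ψ) + lam 1 * Real.cos (θ 1 - ψ)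
      + lam 2 * Real.cos (θ 2 - ψ) + lam 3 * Real.cos (θ 3 - ψ) = 0 := by
    intro ψ
    simp only [Real.cos_sub]
    linear_combination Real.cos ψ * hvx + Real.sin ψ * hvy
  have Ew : ∀ ψ : ℝ, lam 0 * Real.cos (φ 0 - ψ) + lam 1 * Real.cos (φ 1 - ψ)
      + lam 2 * Real.cos (φ 2 - ψ) + lam 3 * Real.cos (φ 3 - ψ) = 0 := by
    intro ψ
    simp only [Real.cos_sub]
    linear_combination Real.cos ψ * hwx + Real.sin ψ * hwy
  -- rotated equations (θ, ascending order θ3 < θ2 < θ1 < θ0 < θ3 + 2π)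
  have Ev1 : ∀ ψ : ℝ, lam 3 * Real.cos (θ 3 - ψ) + lam 2 * Real.cos (θ 2 - ψ)
      + lam 1 * Real.cos (θ 1 - ψ) + lam 0 * Real.cos (θ 0 - ψ) = 0 := by
    intro ψ; linarith [Ev ψ]
  have Ev2 : ∀ ψ : ℝ, lam 2 * Real.cos (θ 2 - ψ) + lam 1 * Real.cos (θ 1 - ψ)
      + lam 0 * Real.cos (θ 0 - ψ) + lam 3 * Real.cos (θ 3 + 2 * π - ψ) = 0 := by
    intro ψ
    rw [show θ 3 + 2 * π - ψ = θ 3 - ψ + 2 * π by ring, Real.cos_add_two_pi]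
    linarith [Ev ψ]
  have Ev3 : ∀ ψ : ℝ, lam 1 * Real.cos (θ 1 - ψ) + lam 0 * Real.cos (θ 0 - ψ)
      + lam 3 * Real.cos (θ 3 + 2 * π - ψ) + lam 2 * Real.cos (θ 2 + 2 * π - ψ) = 0 := by
    intro ψ
    rw [show θ 3 + 2 * π - ψ = θ 3 - ψ + 2 * π by ring, Real.cos_add_two_pi,
      show θ 2 + 2 * π - ψ = θ 2 - ψ + 2 * π by ring, Real.cos_add_two_pi]
    linarith [Ev ψ]
  have Ev4 : ∀ ψ : ℝ, lam 0 * Real.cos (θ 0 - ψ) + lam 3 * Real.cos (θ 3 + 2 * π - ψ)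
      + lam 2 * Real.cos (θ 2 + 2 * π - ψ) + lam 1 * Real.cos (θ 1 + 2 * π - ψ) = 0 := by
    intro ψ
    rw [show θ 3 + 2 * π - ψ = θ 3 - ψ + 2 * π by ring, Real.cos_add_two_pi,
      show θ 2 + 2 * π - ψ = θ 2 - ψ + 2 * π by ring, Real.cos_add_two_pi,
      show θ 1 + 2 * π - ψ = θ 1 - ψ + 2 * π by ring, Real.cos_add_two_pi]
    linarith [Ev ψ]
  have Ev0 : ∀ ψ : ℝ, lam 0 * Real.cos (θ 0 - 2 * π - ψ) + lam 3 * Real.cos (θ 3 - ψ)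
      + lam 2 * Real.cos (θ 2 - ψ) + lam 1 * Real.cos (θ 1 - ψ) = 0 := by
    intro ψ
    rw [show θ 0 - 2 * π - ψ = θ 0 - ψ - 2 * π by ring, Real.cos_sub_two_pi]
    linarith [Ev ψ]
  have Ew2 : ∀ ψ : ℝ, lam 1 * Real.cos (φ 1 - ψ) + lam 2 * Real.cos (φ 2 - ψ)
      + lam 3 * Real.cos (φ 3 - ψ) + lam 0 * Real.cos (φ 0 + 2 * π - ψ) = 0 := by
    intro ψ
    rw [show φ 0 + 2 * π - ψ = φ 0 - ψ + 2 * π by ring, Real.cos_add_two_pi]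
    linarith [Ew ψ]
  have Ew3 : ∀ ψ : ℝ, lam 2 * Real.cos (φ 2 - ψ) + lam 3 * Real.cos (φ 3 - ψ)
      + lam 0 * Real.cos (φ 0 + 2 * π - ψ) + lam 1 * Real.cos (φ 1 + 2 * π - ψ) = 0 := by
    intro ψ
    rw [show φ 0 + 2 * π - ψ = φ 0 - ψ + 2 * π by ring, Real.cos_add_two_pi,
      show φ 1 + 2 * π - ψ = φ 1 - ψ + 2 * π by ring, Real.cos_add_two_pi]
    linarith [Ew ψ]
  have Ew4 : ∀ ψ : ℝ, lam 3 * Real.cos (φ 3 - ψ) + lam 0 * Real.cos (φ 0 + 2 * π - ψ)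
      + lam 1 * Real.cos (φ 1 + 2 * π - ψ) + lam 2 * Real.cos (φ 2 + 2 * π - ψ) = 0 := by
    intro ψ
    rw [show φ 0 + 2 * π - ψ = φ 0 - ψ + 2 * π by ring, Real.cos_add_two_pi,
      show φ 1 + 2 * π - ψ = φ 1 - ψ + 2 * π by ring, Real.cos_add_two_pi,
      show φ 2 + 2 * π - ψ = φ 2 - ψ + 2 * π by ring, Real.cos_add_two_pi]
    linarith [Ew ψ]
  have Ew0 : ∀ ψ : ℝ, lam 3 * Real.cos (φ 3 - 2 * π - ψ) + lam 0 * Real.cos (φ 0 - ψ)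
      + lam 1 * Real.cos (φ 1 - ψ) + lam 2 * Real.cos (φ 2 - ψ) = 0 := by
    intro ψ
    rw [show φ 3 - 2 * π - ψ = φ 3 - ψ - 2 * π by ring, Real.cos_sub_two_pi]
    linarith [Ew ψ]
  -- the eight gap bounds
  have g3lt : θ 2 - θ 3 < π :=
    gapBound (θ 3) (θ 2) (θ 1) (θ 0) _ _ _ _ l3 l2 l1 l0
      (by linarith) (by linarith) (by linarith) (by linarith) Ev1
  have g2lt : θ 1 - θ 2 < π :=
    gapBound (θ 2) (θ 1) (θ 0) (θ 3 + 2 * π) _ _ _ _ l2 l1 l0 l3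
      (by linarith) (by linarith) (by linarith) (by linarith) Ev2
  have g1lt : θ 0 - θ 1 < π :=
    gapBound (θ 1) (θ 0) (θ 3 + 2 * π) (θ 2 + 2 * π) _ _ _ _ l1 l0 l3 l2
      (by linarith) (by linarith) (by linarith) (by linarith) Ev3
  have g4lt : θ 3 + 2 * π - θ 0 < π :=
    gapBound (θ 0) (θ 3 + 2 * π) (θ 2 + 2 * π) (θ 1 + 2 * π) _ _ _ _ l0 l3 l2 l1
      (by linarith) (by linarith) (by linarith) (by linarith) Ev4
  have h1lt : φ 1 - φ 0 < π :=
    gapBound (φ 0) (φ 1) (φ 2) (φ 3) _ _ _ _ l0 l1 l2 l3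
      (by linarith) (by linarith) (by linarith) (by linarith) Ew
  have h2lt : φ 2 - φ 1 < π :=
    gapBound (φ 1) (φ 2) (φ 3) (φ 0 + 2 * π) _ _ _ _ l1 l2 l3 l0
      (by linarith) (by linarith) (by linarith) (by linarith) Ew2
  have h3lt : φ 3 - φ 2 < π :=
    gapBound (φ 2) (φ 3) (φ 0 + 2 * π) (φ 1 + 2 * π) _ _ _ _ l2 l3 l0 l1
      (by linarith) (by linarith) (by linarith) (by linarith) Ew3
  have h4lt : φ 0 + 2 * π - φ 3 < π :=
    gapBound (φ 3) (φ 0 + 2 * π) (φ 1 + 2 * π) (φ 2 + 2 * π) _ _ _ _ l3 l0 l1 l2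
      (by linarith) (by linarith) (by linarith) (by linarith) Ew4
  -- the four candidate triples
  have case1 : π ≤ θ 0 - θ 2 → π ≤ φ 2 - φ 0 → ∃ A : Finset (Fin 4), A.card = 3 ∧
      (0 : ℝ × ℝ) ∈ convexHull ℝ (v '' (A : Set (Fin 4))) ∧
      (0 : ℝ × ℝ) ∈ convexHull ℝ (w '' (A : Set (Fin 4))) := by
    intro cG cH
    refine ⟨{0, 1, 2}, by decide, ?_, ?_⟩
    · have hA : ({2, 1, 0} : Finset (Fin 4)) = {0, 1, 2} := by decide
      rw [← hA]
      exact tri v 2 1 0 (θ 2) (θ 1) (θ 0) (by decide) (by decide) (by decide)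
        (hv 2) (hv 1) (hv 0) (by linarith) (by linarith) (by linarith) (by linarith)
        cG (by linarith)
    · exact tri w 0 1 2 (φ 0) (φ 1) (φ 2) (by decide) (by decide) (by decide)
        (hw 0) (hw 1) (hw 2) (by linarith) (by linarith) (by linarith) (by linarith)
        cH (by linarith)
  have case2 : θ 0 - θ 2 ≤ π → φ 2 - φ 0 ≤ π → ∃ A : Finset (Fin 4), A.card = 3 ∧
      (0 : ℝ × ℝ) ∈ convexHull ℝ (v '' (A : Set (Fin 4))) ∧
      (0 : ℝ × ℝ) ∈ convexHull ℝ (w '' (A : Set (Fin 4))) := by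
    intro cG cH
    refine ⟨{0, 2, 3}, by decide, ?_, ?_⟩
    · have hA : ({3, 2, 0} : Finset (Fin 4)) = {0, 2, 3} := by decide
      rw [← hA]
      exact tri v 3 2 0 (θ 3) (θ 2) (θ 0) (by decide) (by decide) (by decide)
        (hv 3) (hv 2) (hv 0) (by linarith) (by linarith) (by linarith) cG
        (by linarith) (by linarith)
    · have hA : ({0, 2, 3} : Finset (Fin 4)) = {0, 2, 3} := rfl
      exact tri w 0 2 3 (φ 0) (φ 2) (φ 3) (by decide) (by decide) (by decide)
        (hw 0) (hw 2) (hw 3) (by linarith) (by linarith) cH (by linarith)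
        (by linarith) (by linarith)
  have case3 : θ 1 - θ 3 ≤ π → φ 3 - φ 1 ≤ π → ∃ A : Finset (Fin 4), A.card = 3 ∧
      (0 : ℝ × ℝ) ∈ convexHull ℝ (v '' (A : Set (Fin 4))) ∧
      (0 : ℝ × ℝ) ∈ convexHull ℝ (w '' (A : Set (Fin 4))) := by
    intro cG cH
    refine ⟨{0, 1, 3}, by decide, ?_, ?_⟩
    · have hA : ({3, 1, 0} : Finset (Fin 4)) = {0, 1, 3} := by decide
      rw [← hA]
      exact tri v 3 1 0 (θ 3) (θ 1) (θ 0) (by decide) (by decide) (by decide)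
        (hv 3) (hv 1) (hv 0) (by linarith) (by linarith) cG (by linarith)
        (by linarith) (by linarith)
    · exact tri w 0 1 3 (φ 0) (φ 1) (φ 3) (by decide) (by decide) (by decide)
        (hw 0) (hw 1) (hw 3) (by linarith) (by linarith) (by linarith) cH
        (by linarith) (by linarith)
  have case4 : π ≤ θ 1 - θ 3 → π ≤ φ 3 - φ 1 → ∃ A : Finset (Fin 4), A.card = 3 ∧
      (0 : ℝ × ℝ) ∈ convexHull ℝ (v '' (A : Set (Fin 4))) ∧
      (0 : ℝ × ℝ) ∈ convexHull ℝ (w '' (A : Set (Fin 4))) := by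
    intro cG cH
    refine ⟨{1, 2, 3}, by decide, ?_, ?_⟩
    · have hA : ({3, 2, 1} : Finset (Fin 4)) = {1, 2, 3} := by decide
      rw [← hA]
      exact tri v 3 2 1 (θ 3) (θ 2) (θ 1) (by decide) (by decide) (by decide)
        (hv 3) (hv 2) (hv 1) (by linarith) (by linarith) (by linarith) (by linarith)
        cG (by linarith)
    · exact tri w 1 2 3 (φ 1) (φ 2) (φ 3) (by decide) (by decide) (by decide)
        (hw 1) (hw 2) (hw 3) (by linarith) (by linarith) (by linarith) (by linarith)
        cH (by linarith)
  -- contradiction cases via the squeeze lemma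
  have bad1 : θ 0 - θ 2 < π → π < φ 2 - φ 0 → θ 1 - θ 3 < π → π < φ 3 - φ 1 → False := by
    intro cG1 cH1 cG2 cH2
    have sv := squeeze (θ 3) (θ 2) (θ 1) (θ 0) _ _ _ _ l3 l2 l1 l0
      (by linarith) (by linarith) (by linarith) cG2 cG1 Ev1
    have sw := squeeze (φ 2) (φ 3) (φ 0 + 2 * π) (φ 1 + 2 * π) _ _ _ _ l2 l3 l0 l1
      (by linarith) (by linarith) (by linarith) (by linarith) (by linarith) Ew3
    linarith
  have bad2 : θ 0 - θ 2 < π → π < φ 2 - φ 0 → π < θ 1 - θ 3 → φ 3 - φ 1 < π → False := by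
    intro cG1 cH1 cG2 cH2
    have sv := squeeze (θ 2) (θ 1) (θ 0) (θ 3 + 2 * π) _ _ _ _ l2 l1 l0 l3
      (by linarith) (by linarith) (by linarith) cG1 (by linarith) Ev2
    have sw := squeeze (φ 1) (φ 2) (φ 3) (φ 0 + 2 * π) _ _ _ _ l1 l2 l3 l0
      (by linarith) (by linarith) (by linarith) cH2 (by linarith) Ew2
    linarith
  have bad3 : π < θ 0 - θ 2 → φ 2 - φ 0 < π → θ 1 - θ 3 < π → π < φ 3 - φ 1 → False := by
    intro cG1 cH1 cG2 cH2
    have sv := squeeze (θ 0 - 2 * π) (θ 3) (θ 2) (θ 1) _ _ _ _ l0 l3 l2 l1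
      (by linarith) (by linarith) (by linarith) (by linarith) cG2 Ev0
    have sw := squeeze (φ 3 - 2 * π) (φ 0) (φ 1) (φ 2) _ _ _ _ l3 l0 l1 l2
      (by linarith) (by linarith) (by linarith) (by linarith) cH1 Ew0
    linarith
  have bad4 : π < θ 0 - θ 2 → φ 2 - φ 0 < π → π < θ 1 - θ 3 → φ 3 - φ 1 < π → False := by
    intro cG1 cH1 cG2 cH2
    have sv := squeeze (θ 1) (θ 0) (θ 3 + 2 * π) (θ 2 + 2 * π) _ _ _ _ l1 l0 l3 l2
      (by linarith) (by linarith) (by linarith) (by linarith) (by linarith) Ev3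
    have sw := squeeze (φ 0) (φ 1) (φ 2) (φ 3) _ _ _ _ l0 l1 l2 l3
      (by linarith) (by linarith) (by linarith) cH1 cH2 Ew
    linarith
  -- case analysis
  rcases lt_trichotomy (θ 0 - θ 2) π with c1 | c1 | c1
  · rcases le_or_gt (φ 2 - φ 0) π with d1 | d1
    · exact case2 c1.le d1
    · rcases lt_trichotomy (θ 1 - θ 3) π with c2 | c2 | c2
      · rcases le_or_gt (φ 3 - φ 1) π with d2 | d2
        · exact case3 c2.le d2
        · exact absurd (bad1 c1 d1 c2 d2) (fun h => h)
      · rcases le_or_gt π (φ 3 - φ 1) with d2 | d2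
        · exact case4 c2.ge d2
        · exact case3 c2.le d2.le
      · rcases le_or_gt π (φ 3 - φ 1) with d2 | d2
        · exact case4 c2.le d2
        · exact absurd (bad2 c1 d1 c2 d2) (fun h => h)
  · rcases le_or_gt π (φ 2 - φ 0) with d1 | d1
    · exact case1 c1.ge d1
    · exact case2 c1.le d1.le
  · rcases le_or_gt π (φ 2 - φ 0) with d1 | d1
    · exact case1 c1.le d1
    · rcases lt_trichotomy (θ 1 - θ 3) π with c2 | c2 | c2
      · rcases le_or_gt (φ 3 - φ 1) π with d2 | d2
        · exact case3 c2.le d2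
        · exact absurd (bad3 c1 d1 c2 d2) (fun h => h)
      · rcases le_or_gt π (φ 3 - φ 1) with d2 | d2
        · exact case4 c2.ge d2
        · exact case3 c2.le d2.le
      · rcases le_or_gt π (φ 3 - φ 1) with d2 | d2
        · exact case4 c2.le d2
        · exact absurd (bad4 c1 d1 c2 d2) (fun h => h)
end

section
/- Let v₁,v₂,v₃,v₄,v₅ be unit vectors in ℝ² occurring in this cyclic order on the unit circle (i.e., there exist real numbers φ₁ < φ₂ < φ₃ < φ₄ < φ₅ < φ₁ + 2π with vᵢ = (cos φᵢ, sin φᵢ)), and let λ₁,…,λ₅ ∈ (0,1) satisfy λ₁+⋯+λ₅ = 1 and λ₁v₁+⋯+λ₅v₅ = 0. Then there exist at least three distinct indices j ∈ {1,…,5} such that the origin of ℝ² belongs to the convex hull of the four points {vᵢ : i ∈ {1,…,5}, i ≠ j}. -/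
/-!
Call `j` good when the arc from `v (j - 1)` through `v j` to `v (j + 1)` has length at most `π`.
For angles `x < y < z` with `z - x ≤ π`, the identity
`sin (z - y) • u x + sin (y - x) • u z = sin (z - x) • u y` (with `u θ = (cos θ, sin θ)`) writes
`v j` as a nonnegative combination of its neighbours; substituting it into `∑ λᵢ • vᵢ = 0` puts
the origin in the convex hull of the other four vectors. The arcs of `j` and `j + 2` together
cover all gaps between consecutive vectors but one, so their lengths add up to less than `2π` and
one of `j`, `j + 2` is good. In a pentagon this leaves at most two bad indices.
-/

open Real Finset

theorem zero_mem_convexHull_image_ne_of_smul_add_smul {ι E : Type*} [Fintype ι] [AddCommGroup E]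
    [Module ℝ E] {v : ι → E} {lam : ι → ℝ} (hlam : ∀ i, 0 ≤ lam i)
    (hv0 : ∑ i, lam i • v i = 0) {j p q : ι} (hlamj : 0 < lam j) (hp : p ≠ j) (hq : q ≠ j)
    {α β γ : ℝ} (hα : 0 ≤ α) (hβ : 0 ≤ β) (hαβ : 0 < α + β) (hγ : 0 ≤ γ)
    (hrel : α • v p + β • v q = γ • v j) :
    (0 : E) ∈ convexHull ℝ (v '' {i | i ≠ j}) := by
  classical
  set t := univ.erase j
  have hpt : p ∈ t := mem_erase.2 ⟨hp, mem_univ p⟩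
  have hqt : q ∈ t := mem_erase.2 ⟨hq, mem_univ q⟩
  -- substitute `γ • v j = α • v p + β • v q` into `γ • ∑ i, lam i • v i = 0`
  set w : ι → ℝ := fun i =>
    γ * lam i + lam j * ((if i = p then α else 0) + (if i = q then β else 0))
  have hw₀ : ∀ i ∈ t, 0 ≤ w i := fun i _ => by
    have := hlam i
    simp only [w]; split_ifs <;> positivity
  have hws : 0 < ∑ i ∈ t, w i := by
    simp only [w, sum_add_distrib, ← mul_sum, sum_ite_eq', hpt, hqt, if_true]
    have := sum_nonneg fun i (_ : i ∈ t) => hlam i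
    positivity
  have hwv : ∑ i ∈ t, w i • v i = 0 := by
    have hrest : ∑ i ∈ t, lam i • v i = -(lam j • v j) := by
      rw [eq_neg_iff_add_eq_zero, sum_erase_add _ _ (mem_univ j), hv0]
    calc ∑ i ∈ t, w i • v i
        = γ • ∑ i ∈ t, lam i • v i + lam j • (α • v p + β • v q) := by
          simp only [w, add_smul, mul_smul, ite_smul, zero_smul, sum_add_distrib, ← smul_sum,
            sum_ite_eq', hpt, hqt, if_true, smul_add]
      _ = 0 := by rw [hrest, hrel, smul_neg, smul_comm, neg_add_cancel]
  have := t.centerMass_mem_convexHull hw₀ hws (z := v)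
    fun i hi => Set.mem_image_of_mem v (ne_of_mem_erase hi)
  rwa [centerMass, hwv, smul_zero] at this

theorem sin_sub_smul_add_sin_sub_smul (x y z : ℝ) :
    sin (z - y) • (cos x, sin x) + sin (y - x) • (cos z, sin z) =
      sin (z - x) • ((cos y, sin y) : ℝ × ℝ) := by
  ext <;> simp only [Prod.fst_add, Prod.snd_add, Prod.smul_fst, Prod.smul_snd, smul_eq_mul,
    sin_sub] <;> ring

theorem Fin.three_le_card_filter_of_or_add_two (P : Fin 5 → Prop) [DecidablePred P]
    (h : ∀ i, P i ∨ P (i + 2)) : 3 ≤ (univ.filter P).card := by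
  have key : ∀ b : Fin 5 → Bool, (∀ i, b i ∨ b (i + 2)) →
      3 ≤ (univ.filter fun i => b i).card := by
    decide
  simpa using key (fun i => decide (P i)) (by simpa using h)

theorem zero_mem_convexHull_image_ne_of_arc_le_pi {ι : Type*} [Fintype ι] {v : ι → ℝ × ℝ}
    {lam : ι → ℝ} (hlam : ∀ i, 0 ≤ lam i) (hv0 : ∑ i, lam i • v i = 0) {j p q : ι}
    (hlamj : 0 < lam j) (hp : p ≠ j) (hq : q ≠ j) {x y z : ℝ} (hxy : x < y) (hyz : y < z)
    (hzx : z - x ≤ π) (hvp : v p = (cos x, sin x)) (hvj : v j = (cos y, sin y))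
    (hvq : v q = (cos z, sin z)) :
    (0 : ℝ × ℝ) ∈ convexHull ℝ (v '' {i | i ≠ j}) := by
  have hα : 0 < sin (z - y) := sin_pos_of_pos_of_lt_pi (by linarith) (by linarith)
  have hβ : 0 ≤ sin (y - x) := sin_nonneg_of_nonneg_of_le_pi (by linarith) (by linarith)
  have hγ : 0 ≤ sin (z - x) := sin_nonneg_of_nonneg_of_le_pi (by linarith) hzx
  refine zero_mem_convexHull_image_ne_of_smul_add_smul hlam hv0 hlamj hp hq hα.le hβ
    (by positivity) hγ ?_
  rw [hvp, hvq, hvj]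
  exact sin_sub_smul_add_sin_sub_smul x y z

theorem stmt_1_general (v : Fin 5 → ℝ × ℝ) (lam : Fin 5 → ℝ)
    (hlam : ∀ i, lam i ∈ Set.Ioo (0 : ℝ) 1)
    (φ : Fin 5 → ℝ)
    (hφ : φ 0 < φ 1 ∧ φ 1 < φ 2 ∧ φ 2 < φ 3 ∧ φ 3 < φ 4 ∧ φ 4 < φ 0 + 2 * π)
    (hv : ∀ i, v i = (Real.cos (φ i), Real.sin (φ i)))
    (hv0 : lam 0 • v 0 + lam 1 • v 1 + lam 2 • v 2 + lam 3 • v 3 + lam 4 • v 4 = 0) :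
    ∃ J : Finset (Fin 5), 3 ≤ J.card ∧
      ∀ j ∈ J, (0 : ℝ × ℝ) ∈ convexHull ℝ (v '' {i : Fin 5 | i ≠ j}) := by
  obtain ⟨h01, h12, h23, h34, h40⟩ := hφ
  -- angles of the neighbours `v (j - 1)` and `v (j + 1)`, lifted so that `prev j < φ j < next j`
  set prev : Fin 5 → ℝ := ![φ 4 - 2 * π, φ 0, φ 1, φ 2, φ 3]
  set next : Fin 5 → ℝ := ![φ 1, φ 2, φ 3, φ 4, φ 0 + 2 * π]
  have hgood : ∀ j, next j - prev j ≤ π →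
      (0 : ℝ × ℝ) ∈ convexHull ℝ (v '' {i : Fin 5 | i ≠ j}) := by
    intro j hj
    refine zero_mem_convexHull_image_ne_of_arc_le_pi (fun i => (hlam i).1.le)
      (by rwa [Fin.sum_univ_five]) (hlam j).1 (p := j - 1) (q := j + 1) ?_ ?_ ?_ ?_ hj ?_ (hv j) ?_
    all_goals fin_cases j <;> simp [prev, next, hv, show (-1 : Fin 5) = 4 from rfl] <;> linarith
  have harcs : ∀ j, next j - prev j ≤ π ∨ next (j + 2) - prev (j + 2) ≤ π := by
    intro j
    by_contra! h
    fin_cases j <;> simp [prev, next] at h <;> linarith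
  exact ⟨_, Fin.three_le_card_filter_of_or_add_two _ harcs, fun j hj => hgood j (mem_filter.1 hj).2⟩

/-- If five unit vectors `v₁,…,v₅` occur in cyclic order on the unit circle and
`∑ λᵢ vᵢ = 0` for weights `λᵢ ∈ (0,1)` with `∑ λᵢ = 1`, then there are at least three
indices `j` such that the origin lies in the convex hull of the remaining four vectors. -/
theorem stmt_1 (v : Fin 5 → ℝ × ℝ) (lam : Fin 5 → ℝ)
    (hlam : ∀ i, lam i ∈ Set.Ioo (0 : ℝ) 1)
    (φ : Fin 5 → ℝ)
    (hφ : φ 0 < φ 1 ∧ φ 1 < φ 2 ∧ φ 2 < φ 3 ∧ φ 3 < φ 4 ∧ φ 4 < φ 0 + 2 * π)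
    (hv : ∀ i, v i = (Real.cos (φ i), Real.sin (φ i)))
    (hsum : lam 0 + lam 1 + lam 2 + lam 3 + lam 4 = 1)
    (hv0 : lam 0 • v 0 + lam 1 • v 1 + lam 2 • v 2 + lam 3 • v 3 + lam 4 • v 4 = 0) :
    ∃ J : Finset (Fin 5), 3 ≤ J.card ∧
      ∀ j ∈ J, (0 : ℝ × ℝ) ∈ convexHull ℝ (v '' {i : Fin 5 | i ≠ j}) :=
  stmt_1_general v lam hlam φ hφ hv hv0
end

section
/- Let v₁,v₂,v₃,v₄ be unit vectors in ℝ² occurring in this cyclic order on the unit circle (i.e., there exist real numbers φ₁ < φ₂ < φ₃ < φ₄ < φ₁ + 2π with vᵢ = (cos φᵢ, sin φᵢ)). If the origin of ℝ² belongs to the convex hull of {v₁,v₂,v₃,v₄}, then there exist at least two distinct three-element subsets A ⊆ {1,2,3,4} such that the origin belongs to the convex hull of {vᵢ : i ∈ A}. -/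
open Real

lemma zero_mem_hull_triple {a b c : ℝ} (hab : a < b) (hbc : b < c) (hca : c < a + 2*π)
    (h1 : b - a ≤ π) (h2 : c - b ≤ π) (h3 : a + 2*π - c ≤ π) {s : Set (ℝ × ℝ)}
    (ha : ((Real.cos a, Real.sin a) : ℝ × ℝ) ∈ s)
    (hb : ((Real.cos b, Real.sin b) : ℝ × ℝ) ∈ s)
    (hc : ((Real.cos c, Real.sin c) : ℝ × ℝ) ∈ s) :
    (0 : ℝ × ℝ) ∈ convexHull ℝ s := by
  have hpi := Real.pi_pos
  set w1 := Real.sin (c - b) with hw1def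
  set w2 := Real.sin (b - a) with hw2def
  set w3 := Real.sin (a + 2*π - c) with hw3def
  have hw1 : 0 ≤ w1 := Real.sin_nonneg_of_nonneg_of_le_pi (by linarith) h2
  have hw2 : 0 ≤ w2 := Real.sin_nonneg_of_nonneg_of_le_pi (by linarith) h1
  have hw3 : 0 ≤ w3 := Real.sin_nonneg_of_nonneg_of_le_pi (by linarith) h3
  have hsum : 0 < w1 + w2 + w3 := by
    rcases lt_or_eq_of_le h1 with h | h
    · have : 0 < w2 := Real.sin_pos_of_pos_of_lt_pi (by linarith) (by linarith)
      linarith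
    · have : 0 < w1 := Real.sin_pos_of_pos_of_lt_pi (by linarith) (by linarith)
      linarith
  have hcomb : w1 • ((Real.cos a, Real.sin a) : ℝ × ℝ)
      + w3 • ((Real.cos b, Real.sin b) : ℝ × ℝ)
      + w2 • ((Real.cos c, Real.sin c) : ℝ × ℝ) = 0 := by
    have e3 : w3 = Real.sin (a - c) := by
      rw [hw3def, show a + 2*π - c = (a - c) + 2*π by ring, Real.sin_add_two_pi]
    rw [hw1def, hw2def, e3]
    simp only [Prod.smul_mk, Prod.mk_add_mk, Prod.mk_eq_zero, smul_eq_mul, Real.sin_sub]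
    constructor <;> ring
  have hmem := Finset.centerMass_mem_convexHull (Finset.univ : Finset (Fin 3))
      (w := ![w1, w3, w2])
      (z := ![((Real.cos a, Real.sin a) : ℝ × ℝ), (Real.cos b, Real.sin b),
        (Real.cos c, Real.sin c)])
      (by intro i _; fin_cases i <;> simpa using by assumption)
      (by rw [Fin.sum_univ_three]; simpa using by linarith)
      (by intro i _; fin_cases i <;> simpa using by assumption)
  rwa [Finset.centerMass, Fin.sum_univ_three, Fin.sum_univ_three,
    show (![w1, w3, w2] : Fin 3 → ℝ) 0 = w1 from rfl,
    show (![w1, w3, w2] : Fin 3 → ℝ) 1 = w3 from rfl,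
    show (![w1, w3, w2] : Fin 3 → ℝ) 2 = w2 from rfl,
    show (![((Real.cos a, Real.sin a) : ℝ × ℝ), (Real.cos b, Real.sin b),
      (Real.cos c, Real.sin c)]) 0 = (Real.cos a, Real.sin a) from rfl,
    show (![((Real.cos a, Real.sin a) : ℝ × ℝ), (Real.cos b, Real.sin b),
      (Real.cos c, Real.sin c)]) 1 = (Real.cos b, Real.sin b) from rfl,
    show (![((Real.cos a, Real.sin a) : ℝ × ℝ), (Real.cos b, Real.sin b),
      (Real.cos c, Real.sin c)]) 2 = (Real.cos c, Real.sin c) from rfl,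
    hcomb, smul_zero] at hmem

lemma not_mem_hull_of_halfplane (v : Fin 4 → ℝ × ℝ) (φ : Fin 4 → ℝ)
    (hv : ∀ i, v i = (Real.cos (φ i), Real.sin (φ i))) (μ : ℝ)
    (h : ∀ i, 0 < Real.cos (φ i - μ)) :
    (0 : ℝ × ℝ) ∉ convexHull ℝ (Set.range v) := by
  intro h0
  have hlin : IsLinearMap ℝ (fun x : ℝ × ℝ => x.1 * Real.cos μ + x.2 * Real.sin μ) := by
    constructor
    · intro x y; simp [Prod.fst_add, Prod.snd_add]; ring
    · intro c x; simp [smul_eq_mul]; ring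
  have hconv : Convex ℝ {x : ℝ × ℝ | 0 < x.1 * Real.cos μ + x.2 * Real.sin μ} :=
    convex_halfSpace_gt hlin 0
  have hsub : Set.range v ⊆ {x : ℝ × ℝ | 0 < x.1 * Real.cos μ + x.2 * Real.sin μ} := by
    rintro _ ⟨i, rfl⟩
    have hi := h i
    rw [Real.cos_sub] at hi
    rw [hv i]
    simpa [mul_comm] using hi
  have := convexHull_min hsub hconv h0
  simp at this

/-- If four unit vectors `v₁,…,v₄` occur in cyclic order on the unit circle and the origin
lies in the convex hull of all four, then there are at least two distinct three-element
subsets of the indices whose corresponding triangles contain the origin. -/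
theorem stmt_2 (v : Fin 4 → ℝ × ℝ)
    (φ : Fin 4 → ℝ)
    (hφ : φ 0 < φ 1 ∧ φ 1 < φ 2 ∧ φ 2 < φ 3 ∧ φ 3 < φ 0 + 2 * π)
    (hv : ∀ i, v i = (Real.cos (φ i), Real.sin (φ i)))
    (h0 : (0 : ℝ × ℝ) ∈ convexHull ℝ (Set.range v)) :
    ∃ A B : Finset (Fin 4), A ≠ B ∧ A.card = 3 ∧ B.card = 3 ∧
      (0 : ℝ × ℝ) ∈ convexHull ℝ (v '' (A : Set (Fin 4))) ∧
      (0 : ℝ × ℝ) ∈ convexHull ℝ (v '' (B : Set (Fin 4))) := by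
  obtain ⟨h01, h12, h23, h30⟩ := hφ
  have hpi := Real.pi_pos
  have hg1 : φ 1 - φ 0 ≤ π := by
    by_contra hg; push_neg at hg
    refine not_mem_hull_of_halfplane v φ hv ((φ 1 + φ 0 + 2*π)/2) (fun i => ?_) h0
    have hi : i = 0 ∨ i = 1 ∨ i = 2 ∨ i = 3 := by omega
    rcases hi with rfl | rfl | rfl | rfl
    · rw [show φ 0 - (φ 1 + φ 0 + 2*π)/2 = (φ 0 + 2*π - (φ 1 + φ 0 + 2*π)/2) - 2*π by ring,
        Real.cos_sub_two_pi]
      exact Real.cos_pos_of_mem_Ioo ⟨by linarith, by linarith⟩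
    · exact Real.cos_pos_of_mem_Ioo ⟨by linarith, by linarith⟩
    · exact Real.cos_pos_of_mem_Ioo ⟨by linarith, by linarith⟩
    · exact Real.cos_pos_of_mem_Ioo ⟨by linarith, by linarith⟩
  have hg2 : φ 2 - φ 1 ≤ π := by
    by_contra hg; push_neg at hg
    refine not_mem_hull_of_halfplane v φ hv ((φ 2 + φ 1 + 2*π)/2) (fun i => ?_) h0
    have hi : i = 0 ∨ i = 1 ∨ i = 2 ∨ i = 3 := by omega
    rcases hi with rfl | rfl | rfl | rfl
    · rw [show φ 0 - (φ 2 + φ 1 + 2*π)/2 = (φ 0 + 2*π - (φ 2 + φ 1 + 2*π)/2) - 2*π by ring,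
        Real.cos_sub_two_pi]
      exact Real.cos_pos_of_mem_Ioo ⟨by linarith, by linarith⟩
    · rw [show φ 1 - (φ 2 + φ 1 + 2*π)/2 = (φ 1 + 2*π - (φ 2 + φ 1 + 2*π)/2) - 2*π by ring,
        Real.cos_sub_two_pi]
      exact Real.cos_pos_of_mem_Ioo ⟨by linarith, by linarith⟩
    · exact Real.cos_pos_of_mem_Ioo ⟨by linarith, by linarith⟩
    · exact Real.cos_pos_of_mem_Ioo ⟨by linarith, by linarith⟩
  have hg3 : φ 3 - φ 2 ≤ π := by
    by_contra hg; push_neg at hg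
    refine not_mem_hull_of_halfplane v φ hv ((φ 3 + φ 2 + 2*π)/2) (fun i => ?_) h0
    have hi : i = 0 ∨ i = 1 ∨ i = 2 ∨ i = 3 := by omega
    rcases hi with rfl | rfl | rfl | rfl
    · rw [show φ 0 - (φ 3 + φ 2 + 2*π)/2 = (φ 0 + 2*π - (φ 3 + φ 2 + 2*π)/2) - 2*π by ring,
        Real.cos_sub_two_pi]
      exact Real.cos_pos_of_mem_Ioo ⟨by linarith, by linarith⟩
    · rw [show φ 1 - (φ 3 + φ 2 + 2*π)/2 = (φ 1 + 2*π - (φ 3 + φ 2 + 2*π)/2) - 2*π by ring,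
        Real.cos_sub_two_pi]
      exact Real.cos_pos_of_mem_Ioo ⟨by linarith, by linarith⟩
    · rw [show φ 2 - (φ 3 + φ 2 + 2*π)/2 = (φ 2 + 2*π - (φ 3 + φ 2 + 2*π)/2) - 2*π by ring,
        Real.cos_sub_two_pi]
      exact Real.cos_pos_of_mem_Ioo ⟨by linarith, by linarith⟩
    · exact Real.cos_pos_of_mem_Ioo ⟨by linarith, by linarith⟩
  have hg4 : φ 0 + 2*π - φ 3 ≤ π := by
    by_contra hg; push_neg at hg
    refine not_mem_hull_of_halfplane v φ hv ((φ 0 + φ 3)/2) (fun i => ?_) h0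
    have hi : i = 0 ∨ i = 1 ∨ i = 2 ∨ i = 3 := by omega
    rcases hi with rfl | rfl | rfl | rfl <;>
      exact Real.cos_pos_of_mem_Ioo ⟨by linarith, by linarith⟩
  have hA : ∃ A : Finset (Fin 4), (A = {0,2,3} ∨ A = {0,1,2}) ∧
      (0 : ℝ × ℝ) ∈ convexHull ℝ (v '' (A : Set (Fin 4))) := by
    rcases le_or_gt (φ 2 - φ 0) π with h | h
    · refine ⟨{0,2,3}, Or.inl rfl,
        zero_mem_hull_triple (a := φ 0) (b := φ 2) (c := φ 3) (by linarith) h23 h30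
          (by linarith) (by linarith) (by linarith) ?_ ?_ ?_⟩
      · exact ⟨0, by simp, hv 0⟩
      · exact ⟨2, by simp, hv 2⟩
      · exact ⟨3, by simp, hv 3⟩
    · refine ⟨{0,1,2}, Or.inr rfl,
        zero_mem_hull_triple (a := φ 0) (b := φ 1) (c := φ 2) h01 h12 (by linarith)
          (by linarith) (by linarith) (by linarith) ?_ ?_ ?_⟩
      · exact ⟨0, by simp, hv 0⟩
      · exact ⟨1, by simp, hv 1⟩
      · exact ⟨2, by simp, hv 2⟩
  have hB : ∃ B : Finset (Fin 4), (B = {0,1,3} ∨ B = {1,2,3}) ∧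
      (0 : ℝ × ℝ) ∈ convexHull ℝ (v '' (B : Set (Fin 4))) := by
    rcases le_or_gt (φ 3 - φ 1) π with h | h
    · refine ⟨{0,1,3}, Or.inl rfl,
        zero_mem_hull_triple (a := φ 0) (b := φ 1) (c := φ 3) h01 (by linarith) h30
          (by linarith) (by linarith) (by linarith) ?_ ?_ ?_⟩
      · exact ⟨0, by simp, hv 0⟩
      · exact ⟨1, by simp, hv 1⟩
      · exact ⟨3, by simp, hv 3⟩
    · refine ⟨{1,2,3}, Or.inr rfl,
        zero_mem_hull_triple (a := φ 1) (b := φ 2) (c := φ 3) h12 h23 (by linarith)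
          (by linarith) (by linarith) (by linarith) ?_ ?_ ?_⟩
      · exact ⟨1, by simp, hv 1⟩
      · exact ⟨2, by simp, hv 2⟩
      · exact ⟨3, by simp, hv 3⟩
  obtain ⟨A, hAc, hAm⟩ := hA
  obtain ⟨B, hBc, hBm⟩ := hB
  refine ⟨A, B, ?_, ?_, ?_, hAm, hBm⟩ <;>
    rcases hAc with rfl | rfl <;> rcases hBc with rfl | rfl <;> decide
end

section
/- Let a, b, c, d be positive real numbers with b ≠ d. Then, for a real number x, the equation (d+ax)²·(4b²c² − (a²+d²−b²−c²+2adx)²) = a²·(1−x²)·(a²+d²+b²−c²+2adx)² holds if and only if x belongs to the set { −(a²+d²)/(2ad), −(a²+d²+b²−c²+2bd)/(2a(b+d)), (a²+d²+b²−c²−2bd)/(2a(b−d)) }. (In particular, after cancellation of the degree-4 terms this is a genuine cubic equation in x whose root set is exactly the displayed three-element set.) -/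
/-- For positive reals `a, b, c, d` with `b ≠ d`, the squared law-of-cosines equation
`(d+ax)²(4b²c² − (a²+d²−b²−c²+2adx)²) = a²(1−x²)(a²+d²+b²−c²+2adx)²` holds exactly when
`x` is one of the three displayed roots. -/
theorem stmt_3 (a b c d : ℝ) (ha : 0 < a) (hb : 0 < b) (hc : 0 < c) (hd : 0 < d)
    (hbd : b ≠ d) (x : ℝ) :
    (d + a * x) ^ 2 * (4 * b ^ 2 * c ^ 2 - (a ^ 2 + d ^ 2 - b ^ 2 - c ^ 2 + 2 * a * d * x) ^ 2)
      = a ^ 2 * (1 - x ^ 2) * (a ^ 2 + d ^ 2 + b ^ 2 - c ^ 2 + 2 * a * d * x) ^ 2 ↔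
    x ∈ ({-((a ^ 2 + d ^ 2) / (2 * a * d)),
          -((a ^ 2 + d ^ 2 + b ^ 2 - c ^ 2 + 2 * b * d) / (2 * a * (b + d))),
          (a ^ 2 + d ^ 2 + b ^ 2 - c ^ 2 - 2 * b * d) / (2 * a * (b - d))} : Set ℝ) := by
  have h1 : (2 : ℝ) * a * d ≠ 0 := by positivity
  have h2 : (2 : ℝ) * a * (b + d) ≠ 0 := by positivity
  have hbd' : b - d ≠ 0 := sub_ne_zero.mpr hbd
  have h3 : (2 : ℝ) * a * (b - d) ≠ 0 := by
    intro h
    rcases mul_eq_zero.mp h with h | h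
    · rcases mul_eq_zero.mp h with h | h
      · norm_num at h
      · exact ha.ne' h
    · exact hbd' h
  have key : ((d + a * x) ^ 2 * (4 * b ^ 2 * c ^ 2 - (a ^ 2 + d ^ 2 - b ^ 2 - c ^ 2 + 2 * a * d * x) ^ 2)
      = a ^ 2 * (1 - x ^ 2) * (a ^ 2 + d ^ 2 + b ^ 2 - c ^ 2 + 2 * a * d * x) ^ 2) ↔
      (2 * a * d * x + (a ^ 2 + d ^ 2)) *
        ((2 * a * (b + d) * x + (a ^ 2 + d ^ 2 + b ^ 2 - c ^ 2 + 2 * b * d)) *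
          (2 * a * (b - d) * x - (a ^ 2 + d ^ 2 + b ^ 2 - c ^ 2 - 2 * b * d))) = 0 := by
    constructor
    · intro h; nlinarith [h]
    · intro h; nlinarith [h]
  rw [key]
  simp only [Set.mem_insert_iff, Set.mem_singleton_iff, mul_eq_zero]
  constructor
  · rintro (h | h | h)
    · left; field_simp; linarith
    · right; left; field_simp; linarith
    · right; right; field_simp; linarith
  · rintro (h | h | h)
    · left; field_simp at h ⊢; linarith
    · right; left; field_simp at h ⊢; linarith
    · right; right; field_simp at h ⊢; linarith
end

section
/- Let a, b, c be positive real numbers with a ≠ c, and set d = b. Then, for a real number x, the equation (b+ax)²·(4b²c² − (a²−c²+2abx)²) = a²·(1−x²)·(a²+2b²−c²+2abx)² holds if and only if x belongs to the set { −(a²+b²)/(2ab), −(a²+4b²−c²)/(4ab) }. (In this case the equation reduces to a quadratic equation in x whose root set is exactly the displayed two-element set.) -/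
/-- For positive reals `a, b, c` with `a ≠ c` (the case `d = b` of the squared
law-of-cosines equation), the equation
`(b+ax)²(4b²c² − (a²−c²+2abx)²) = a²(1−x²)(a²+2b²−c²+2abx)²` holds exactly when `x` is
one of the two displayed roots. -/
theorem stmt_4 (a b c : ℝ) (ha : 0 < a) (hb : 0 < b) (hc : 0 < c) (hac : a ≠ c) (x : ℝ) :
    (b + a * x) ^ 2 * (4 * b ^ 2 * c ^ 2 - (a ^ 2 - c ^ 2 + 2 * a * b * x) ^ 2)
      = a ^ 2 * (1 - x ^ 2) * (a ^ 2 + 2 * b ^ 2 - c ^ 2 + 2 * a * b * x) ^ 2 ↔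
    x ∈ ({-((a ^ 2 + b ^ 2) / (2 * a * b)),
          -((a ^ 2 + 4 * b ^ 2 - c ^ 2) / (4 * a * b))} : Set ℝ) := by
  have hab : (2 * a * b) ≠ 0 := by positivity
  have hab4 : (4 * a * b) ≠ 0 := by positivity
  have hca : c ^ 2 - a ^ 2 ≠ 0 := by
    intro h
    have h2 : (a - c) * (a + c) = 0 := by nlinarith
    rcases mul_eq_zero.mp h2 with h3 | h3
    · exact hac (by linarith)
    · linarith
  have key : (b + a * x) ^ 2 * (4 * b ^ 2 * c ^ 2 - (a ^ 2 - c ^ 2 + 2 * a * b * x) ^ 2)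
      - a ^ 2 * (1 - x ^ 2) * (a ^ 2 + 2 * b ^ 2 - c ^ 2 + 2 * a * b * x) ^ 2
      = (c ^ 2 - a ^ 2) * ((2 * a * b * x + (a ^ 2 + b ^ 2))
        * (4 * a * b * x + (a ^ 2 + 4 * b ^ 2 - c ^ 2))) := by ring
  simp only [Set.mem_insert_iff, Set.mem_singleton_iff]
  constructor
  · intro h
    have h0 : (c ^ 2 - a ^ 2) * ((2 * a * b * x + (a ^ 2 + b ^ 2))
        * (4 * a * b * x + (a ^ 2 + 4 * b ^ 2 - c ^ 2))) = 0 := by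
      rw [← key]; linarith
    rcases mul_eq_zero.mp h0 with h1 | h1
    · exact absurd h1 hca
    rcases mul_eq_zero.mp h1 with h2 | h2
    · left; field_simp; linarith
    · right; field_simp; linarith
  · rintro (h | h) <;> subst h <;> field_simp <;> ring
end

section
/- Let a, b, c, d be positive real numbers with a + b + c + d = 1 and b ≠ d. Suppose that −1 < (a²+d²+b²−c²−2bd)/(2a(b−d)) < 1. Then either: (i) d < b, b < 1/2, 1/2 − b < c, and 1/2 − b < a; or (ii) d > b, 0 < 1/2 − a − b, 1/2 − a − b < c, and c < 1/2 − b. -/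
/-- If `a, b, c, d > 0` sum to one, `b ≠ d`, and the root
`(a²+d²+b²−c²−2bd)/(2a(b−d))` of the cubic equation lies strictly between `−1` and `1`,
then either (i) `d < b`, `b < 1/2`, `1/2 − b < c`, and `1/2 − b < a`, or
(ii) `d > b`, `0 < 1/2 − a − b`, `1/2 − a − b < c`, and `c < 1/2 − b`. -/
theorem stmt_5 (a b c d : ℝ) (ha : 0 < a) (hb : 0 < b) (hc : 0 < c) (hd : 0 < d)
    (hsum : a + b + c + d = 1) (hbd : b ≠ d)
    (hroot : -1 < (a ^ 2 + d ^ 2 + b ^ 2 - c ^ 2 - 2 * b * d) / (2 * a * (b - d)) ∧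
      (a ^ 2 + d ^ 2 + b ^ 2 - c ^ 2 - 2 * b * d) / (2 * a * (b - d)) < 1) :
    (d < b ∧ b < 1 / 2 ∧ 1 / 2 - b < c ∧ 1 / 2 - b < a) ∨
    (d > b ∧ 0 < 1 / 2 - a - b ∧ 1 / 2 - a - b < c ∧ c < 1 / 2 - b) := by
  obtain ⟨h1, h2⟩ := hroot
  rcases lt_or_gt_of_ne hbd.symm with hlt | hgt
  · -- d < b
    left
    have hD : 0 < 2 * a * (b - d) := by nlinarith
    have e1 := (div_lt_one hD).mp h2
    have e2 := (lt_div_iff₀ hD).mp h1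
    have hcb : c < a + b - d := by nlinarith [mul_pos hc (show (0:ℝ) < a + b - d + c by nlinarith)]
    have hc1 : a - b + d < c := by nlinarith [mul_pos hc (show (0:ℝ) < c + (a - b + d) + (b - d) + (b - d) by nlinarith)]
    have hc2 : b - d - a < c := by nlinarith [mul_pos hc (show (0:ℝ) < c + (b - d - a) + a + a by nlinarith)]
    exact ⟨hlt, by linarith, by linarith, by linarith⟩
  · -- d > b
    right
    have hD : 2 * a * (b - d) < 0 := by nlinarith
    have e1 := (div_lt_iff_of_neg hD).mp h2
    have e2 := (lt_div_iff_of_neg hD).mp h1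
    have hcb : c < a + d - b := by nlinarith [mul_pos hc (show (0:ℝ) < a + d - b + c by nlinarith)]
    have hc1 : a - d + b < c := by nlinarith [mul_pos hc (show (0:ℝ) < c + (a - d + b) + (d - b) + (d - b) by nlinarith)]
    have hc2 : d - b - a < c := by nlinarith [mul_pos hc (show (0:ℝ) < c + (d - b - a) + a + a by nlinarith)]
    exact ⟨hgt, by linarith, by linarith, by linarith⟩
end

section
/- Let a, b, c, d be positive real numbers with a + b + c + d = 1, b ≠ d, and a ≠ c. Then it is impossible that both −1 < (a²+d²+b²−c²−2bd)/(2a(b−d)) < 1 and −1 < (a²+d²+c²−b²−2ac)/(2d(c−a)) < 1 hold simultaneously. -/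
/-- If `a, b, c, d > 0` sum to one, `b ≠ d` and `a ≠ c`, then it is impossible that both
roots `(a²+d²+b²−c²−2bd)/(2a(b−d))` and `(a²+d²+c²−b²−2ac)/(2d(c−a))` lie strictly
between `−1` and `1`. -/
theorem stmt_6 (a b c d : ℝ) (ha : 0 < a) (hb : 0 < b) (hc : 0 < c) (hd : 0 < d)
    (hsum : a + b + c + d = 1) (hbd : b ≠ d) (hac : a ≠ c) :
    ¬ ((-1 < (a ^ 2 + d ^ 2 + b ^ 2 - c ^ 2 - 2 * b * d) / (2 * a * (b - d)) ∧
        (a ^ 2 + d ^ 2 + b ^ 2 - c ^ 2 - 2 * b * d) / (2 * a * (b - d)) < 1) ∧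
       (-1 < (a ^ 2 + d ^ 2 + c ^ 2 - b ^ 2 - 2 * a * c) / (2 * d * (c - a)) ∧
        (a ^ 2 + d ^ 2 + c ^ 2 - b ^ 2 - 2 * a * c) / (2 * d * (c - a)) < 1)) := by
  rintro ⟨⟨h1l, h1r⟩, ⟨h2l, h2r⟩⟩
  have hD1 : (0:ℝ) < (2 * a * (b - d)) ^ 2 := by
    have : b - d ≠ 0 := sub_ne_zero.mpr hbd
    positivity
  have hD2 : (0:ℝ) < (2 * d * (c - a)) ^ 2 := by
    have : c - a ≠ 0 := sub_ne_zero.mpr (Ne.symm hac)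
    positivity
  have hx : (a ^ 2 + d ^ 2 + b ^ 2 - c ^ 2 - 2 * b * d) ^ 2 < (2 * a * (b - d)) ^ 2 := by
    have h : ((a ^ 2 + d ^ 2 + b ^ 2 - c ^ 2 - 2 * b * d) / (2 * a * (b - d))) ^ 2 < 1 := by
      nlinarith [h1l, h1r]
    rw [div_pow, div_lt_one hD1] at h
    exact h
  have hy : (a ^ 2 + d ^ 2 + c ^ 2 - b ^ 2 - 2 * a * c) ^ 2 < (2 * d * (c - a)) ^ 2 := by
    have h : ((a ^ 2 + d ^ 2 + c ^ 2 - b ^ 2 - 2 * a * c) / (2 * d * (c - a))) ^ 2 < 1 := by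
      nlinarith [h2l, h2r]
    rw [div_pow, div_lt_one hD2] at h
    exact h
  have hP1 : (a - b + d - c) * (a - b + d + c) * ((a + b - d - c) * (a + b - d + c)) < 0 := by
    linarith [hx]
  have hP2 : (a - c + d - b) * (a - c + d + b) * ((c + d - a - b) * (c + d - a + b)) < 0 := by
    linarith [hy]
  rcases lt_trichotomy (a + d - b - c) 0 with hu | hu | hu
  · rcases lt_trichotomy (a + b - c - d) 0 with hv | hv | hv
    · have h2 : 0 < a - b + d + c := by linarith
      have h4 : 0 < a + b - d + c := by linarith
      linarith [hP1, mul_pos (mul_pos (by linarith : (0:ℝ) < -(a + d - b - c)) h2)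
        (mul_pos (by linarith : (0:ℝ) < -(a + b - c - d)) h4)]
    · have h0 : (a - b + d - c) * (a - b + d + c) * ((a + b - d - c) * (a + b - d + c)) = 0 := by
        rw [show a + b - d - c = 0 from by linarith]; ring
      linarith [hP1, h0.ge]
    · have h2 : 0 < a - c + d + b := by linarith
      rcases le_or_gt (c + d - a + b) 0 with hpv | hpv
      · linarith
      · linarith [hP2, mul_pos (mul_pos (by linarith : (0:ℝ) < -(a + d - b - c)) h2)
          (mul_pos hv hpv)]
  · have h0 : (a - b + d - c) * (a - b + d + c) * ((a + b - d - c) * (a + b - d + c)) = 0 := by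
      rw [show a - b + d - c = 0 from by linarith]; ring
    linarith [hP1, h0.ge]
  · rcases lt_trichotomy (a + b - c - d) 0 with hv | hv | hv
    · have h2 : 0 < a - c + d + b := by linarith
      have h3 : 0 < c + d - a - b := by linarith
      have h4 : 0 < c + d - a + b := by linarith
      linarith [hP2, mul_pos (mul_pos hu h2) (mul_pos h3 h4)]
    · have h0 : (a - b + d - c) * (a - b + d + c) * ((a + b - d - c) * (a + b - d + c)) = 0 := by
        rw [show a + b - d - c = 0 from by linarith]; ring
      linarith [hP1, h0.ge]
    · have h2 : 0 < a - b + d + c := by linarith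
      have h4 : 0 < a + b - d + c := by linarith
      linarith [hP1, mul_pos (mul_pos hu h2) (mul_pos hv h4)]
end

section
/- The space Sym2 (OnePoint ℂ) of unordered pairs of points of the Riemann sphere, equipped with the quotient topology induced from (OnePoint ℂ) × (OnePoint ℂ), is homeomorphic to the complex projective plane ℂP². -/
/-!
A point `x` of the Riemann sphere gives the linear form `z + x` (read as `1` when `x = ∞`),
with homogeneous coefficients `[x : 1]` (resp. `[1 : 0]`). Multiplying the two linear forms
of a pair gives a symmetric map to `ℂP²`, continuous because locally the homogeneous
coefficients have continuous representatives. The induced map on `Sym2` is injective since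
a binary quadratic form determines its unordered pair of roots, and surjective since over an
algebraically closed field every binary quadratic form splits into linear factors. As `ℂP²` is
Hausdorff (the projection from `ℂ³ ∖ 0` is open and proportionality is a closed condition),
a continuous bijection from the compact space `Sym2 (OnePoint ℂ)` is a homeomorphism.
-/

/-- The quotient topology on the complex projective plane `ℙ ℂ (Fin 3 → ℂ)`, induced from
the subspace `{v // v ≠ 0}` of `ℂ³`. -/
noncomputable instance : TopologicalSpace (Projectivization ℂ (Fin 3 → ℂ)) :=
  (inferInstance : TopologicalSpace (Quotient (projectivizationSetoid ℂ (Fin 3 → ℂ))))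

open scoped LinearAlgebra.Projectivization
open Filter Topology Set

section Algebra

variable {K : Type*} [Field K]

def wedge (v w : Fin 2 → K) : K := v 0 * w 1 - v 1 * w 0

lemma wedge_self (v : Fin 2 → K) : wedge v v = 0 := by
  unfold wedge; ring

lemma wedge_eq_zero_comm {v w : Fin 2 → K} : wedge v w = 0 ↔ wedge w v = 0 := by
  unfold wedge; constructor <;> intro h <;> linear_combination -h

/-- The coefficients (constant, linear, quadratic) of `(v 0 + v 1 z) * (w 0 + w 1 z)`. -/
def linearFormProduct (v w : Fin 2 → K) : Fin 3 → K :=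
  ![v 0 * w 0, v 0 * w 1 + v 1 * w 0, v 1 * w 1]

lemma linearFormProduct_comm (v w : Fin 2 → K) :
    linearFormProduct v w = linearFormProduct w v := by
  ext i; fin_cases i <;> simp [linearFormProduct] <;> ring

lemma linearFormProduct_smul_smul (a b : K) (v w : Fin 2 → K) :
    linearFormProduct (a • v) (b • w) = (a * b) • linearFormProduct v w := by
  ext i; fin_cases i <;> simp [linearFormProduct] <;> ring

lemma linearFormProduct_ne_zero {v w : Fin 2 → K} (hv : v ≠ 0) (hw : w ≠ 0) :
    linearFormProduct v w ≠ 0 := by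
  intro h
  have h₀ := congrFun h 0
  have h₁ := congrFun h 1
  have h₂ := congrFun h 2
  simp only [linearFormProduct, Pi.zero_apply, Matrix.cons_val] at h₀ h₁ h₂
  simp only [Ne, funext_iff, Fin.forall_fin_two, Pi.zero_apply] at hv hw
  grind

/-- The binary quadratic form with coefficients `linearFormProduct v w` is
`u ↦ wedge v u * wedge w u`; evaluating both factorizations at `u = p, q, r, s` matches
up the roots. -/
lemma wedge_eq_zero_of_smul_linearFormProduct_eq {p q r s : Fin 2 → K} {c : K} (hc : c ≠ 0)
    (h : c • linearFormProduct p q = linearFormProduct r s) :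
    (wedge p r = 0 ∧ wedge q s = 0) ∨ (wedge p s = 0 ∧ wedge q r = 0) := by
  have h₀ := congrFun h 0
  have h₁ := congrFun h 1
  have h₂ := congrFun h 2
  simp only [linearFormProduct, Pi.smul_apply, smul_eq_mul, Matrix.cons_val] at h₀ h₁ h₂
  have key (u : Fin 2 → K) : c * (wedge p u * wedge q u) = wedge r u * wedge s u := by
    unfold wedge
    linear_combination u 1 ^ 2 * h₀ - u 0 * u 1 * h₁ + u 0 ^ 2 * h₂
  have hp := key p
  have hq := key q
  have hr := key r
  have hs := key s
  simp only [wedge_self, zero_mul, mul_zero, mul_eq_zero, zero_eq_mul, hc, false_or] at hp hq hr hs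
  rw [wedge_eq_zero_comm (v := r), wedge_eq_zero_comm (v := s)] at hp hq
  tauto

lemma linearFormProduct_surjective [IsAlgClosed K] :
    Function.Surjective fun p : (Fin 2 → K) × (Fin 2 → K) => linearFormProduct p.1 p.2 := by
  intro u
  by_cases h₂ : u 2 = 0
  · refine ⟨(![1, 0], ![u 0, u 1]), ?_⟩
    ext i; fin_cases i <;> simp [linearFormProduct, h₂]
  · open Polynomial in
    obtain ⟨x, hx⟩ := IsAlgClosed.exists_root (C (u 2) * X ^ 2 + C (-u 1) * X + C (u 0))
      (by rw [degree_quadratic h₂]; decide)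
    simp only [IsRoot, eval_add, eval_mul, eval_C, eval_pow, eval_X] at hx
    refine ⟨(![x, 1], ![u 1 - u 2 * x, u 2]), ?_⟩
    ext i; fin_cases i <;> simp [linearFormProduct]
    · linear_combination -hx
    · ring

end Algebra

namespace OnePoint

variable {K : Type*} [Field K]

/-- The convention of `OnePoint.equivProjectivization`: `t ↦ [t : 1]`, `∞ ↦ [1 : 0]`. -/
def homogCoord (x : OnePoint K) : Fin 2 → K := x.elim ![1, 0] fun t => ![t, 1]

@[simp] lemma homogCoord_infty : homogCoord (∞ : OnePoint K) = ![1, 0] := rfl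

@[simp] lemma homogCoord_coe (t : K) : homogCoord (t : OnePoint K) = ![t, 1] := rfl

lemma homogCoord_ne_zero (x : OnePoint K) : homogCoord x ≠ 0 := by
  induction x using OnePoint.rec <;> simp [funext_iff, Fin.forall_fin_two]

lemma wedge_homogCoord_eq_zero_iff {x y : OnePoint K} :
    wedge (homogCoord x) (homogCoord y) = 0 ↔ x = y := by
  induction x using OnePoint.rec <;> induction y using OnePoint.rec <;> simp [wedge, sub_eq_zero]

lemma exists_eq_smul_homogCoord (v : Fin 2 → K) :
    ∃ (c : K) (x : OnePoint K), v = c • homogCoord x := by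
  by_cases h₁ : v 1 = 0
  · refine ⟨v 0, ∞, ?_⟩
    ext i; fin_cases i <;> simp [h₁]
  · refine ⟨v 1, ↑(v 0 / v 1), ?_⟩
    ext i; fin_cases i <;> simp [mul_div_cancel₀ _ h₁]

variable (K) in
/-- `{x, y} ↦ [(z + x)(z + y)]`, where a factor `z + ∞` is read as `1`. -/
noncomputable def quadraticOfPair (x y : OnePoint K) : ℙ K (Fin 3 → K) :=
  Projectivization.mk K (linearFormProduct (homogCoord x) (homogCoord y))
    (linearFormProduct_ne_zero (homogCoord_ne_zero x) (homogCoord_ne_zero y))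

lemma quadraticOfPair_comm (x y : OnePoint K) :
    quadraticOfPair K x y = quadraticOfPair K y x := by
  simp only [quadraticOfPair, linearFormProduct_comm (homogCoord x)]

variable (K) in
noncomputable def quadraticOfSym2 : Sym2 (OnePoint K) → ℙ K (Fin 3 → K) :=
  Sym2.lift ⟨quadraticOfPair K, quadraticOfPair_comm⟩

lemma quadraticOfSym2_injective : Function.Injective (quadraticOfSym2 K) := by
  intro z z' h
  induction z using Sym2.ind with | _ x y =>
  induction z' using Sym2.ind with | _ x' y' =>
  obtain ⟨c, hc⟩ := (Projectivization.mk_eq_mk_iff _ _ _ _ _).1 h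
  have hroots := wedge_eq_zero_of_smul_linearFormProduct_eq c.ne_zero hc
  simp only [wedge_homogCoord_eq_zero_iff] at hroots
  rw [Sym2.eq_iff]
  tauto

lemma quadraticOfSym2_surjective [IsAlgClosed K] : Function.Surjective (quadraticOfSym2 K) := by
  intro p
  induction p using Projectivization.ind with | h u _ =>
  obtain ⟨⟨v, w⟩, rfl⟩ := linearFormProduct_surjective u
  obtain ⟨a, x, rfl⟩ := exists_eq_smul_homogCoord v
  obtain ⟨b, y, rfl⟩ := exists_eq_smul_homogCoord w
  refine ⟨s(x, y), ((Projectivization.mk_eq_mk_iff' _ _ _ _ _).2 ⟨a * b, ?_⟩).symm⟩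
  exact (linearFormProduct_smul_smul a b _ _).symm

end OnePoint

lemma continuous_linearFormProduct {K : Type*} [Field K] [TopologicalSpace K]
    [IsTopologicalRing K] :
    Continuous fun p : (Fin 2 → K) × (Fin 2 → K) => linearFormProduct p.1 p.2 :=
  continuous_pi fun i => by fin_cases i <;> simp only [linearFormProduct] <;> simp <;> fun_prop

lemma OnePoint.exists_homogCoord_lift_continuousAt {𝕜 : Type*} [NormedField 𝕜] [ProperSpace 𝕜]
    (x : OnePoint 𝕜) :
    ∃ L : OnePoint 𝕜 → Fin 2 → 𝕜, ContinuousAt L x ∧ (∀ y, L y ≠ 0) ∧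
      ∀ᶠ y in 𝓝 x, ∃ c : 𝕜, c • L y = homogCoord y := by
  induction x using OnePoint.rec with
  | infty =>
    -- `![1, t⁻¹]` is `![t, 1]` rescaled, and it extends continuously to `t = ∞`
    refine ⟨fun y => ![1, y.elim 0 fun t => t⁻¹], ?_, fun y => by simp [funext_iff], ?_⟩
    · rw [continuousAt_infty', coclosedCompact_eq_cocompact, ← Metric.cobounded_eq_cocompact]
      refine tendsto_pi_nhds.2 fun i => ?_
      fin_cases i
      · exact tendsto_const_nhds
      · exact Filter.tendsto_inv₀_cobounded
    · filter_upwards [isOpen_compl_singleton.mem_nhds (OnePoint.infty_ne_coe (0 : 𝕜))] with y hy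
      induction y using OnePoint.rec with
      | infty => exact ⟨1, one_smul _ _⟩
      | coe t =>
        have ht : t ≠ 0 := by simpa using hy
        refine ⟨t, ?_⟩
        ext i; fin_cases i <;> simp [ht]
  | coe z =>
    refine ⟨homogCoord, ?_, homogCoord_ne_zero, .of_forall fun y => ⟨1, one_smul _ _⟩⟩
    rw [continuousAt_coe]
    exact (continuous_pi fun i => by fin_cases i <;> simp <;> fun_prop).continuousAt

lemma Projectivization.mk_eq_mk_iff_mul_eq {K ι : Type*} [Field K] {v w : ι → K} (hv : v ≠ 0)
    (hw : w ≠ 0) : mk K v hv = mk K w hw ↔ ∀ i j, v i * w j = v j * w i := by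
  rw [mk_eq_mk_iff']
  constructor
  · rintro ⟨a, rfl⟩ i j
    simp only [Pi.smul_apply, smul_eq_mul]
    ring
  · intro h
    obtain ⟨j, hj⟩ := Function.ne_iff.mp hw
    refine ⟨v j / w j, funext fun i => ?_⟩
    simp only [Pi.smul_apply, smul_eq_mul]
    rw [div_mul_eq_mul_div, div_eq_iff hj]
    exact (h i j).symm

local notation "ℂP²" => ℙ ℂ (Fin 3 → ℂ)

lemma isQuotientMap_projectivization_mk' : IsQuotientMap (Projectivization.mk' ℂ : _ → ℂP²) :=
  isQuotientMap_quotient_mk'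

lemma isOpenMap_projectivization_mk' : IsOpenMap (Projectivization.mk' ℂ : _ → ℂP²) := by
  intro U hU
  rw [← isQuotientMap_projectivization_mk'.isOpen_preimage]
  have : Projectivization.mk' ℂ ⁻¹' (Projectivization.mk' ℂ '' U : Set ℂP²) =
      ⋃ c : ℂˣ, (fun v : {v : Fin 3 → ℂ // v ≠ 0} => (⟨c • v.1, smul_ne_zero c.ne_zero v.2⟩ :
        {v : Fin 3 → ℂ // v ≠ 0})) ⁻¹' U := by
    ext w
    simp only [mem_preimage, mem_image, mem_iUnion, Projectivization.mk'_eq_mk,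
      Projectivization.mk_eq_mk_iff]
    constructor
    · rintro ⟨v, hvU, c, hc⟩
      exact ⟨c, by simpa [hc] using hvU⟩
    · rintro ⟨c, hc⟩
      exact ⟨_, hc, c, rfl⟩
  rw [this]
  exact isOpen_iUnion fun c => hU.preimage (by fun_prop)

instance : T2Space ℂP² := by
  have hq := isQuotientMap_projectivization_mk'
  have hqq : IsQuotientMap (Prod.map (Projectivization.mk' ℂ) (Projectivization.mk' ℂ) :
      _ → ℂP² × ℂP²) :=
    (isOpenMap_projectivization_mk'.prodMap isOpenMap_projectivization_mk').isQuotientMap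
      (hq.continuous.prodMap hq.continuous) (hq.surjective.prodMap hq.surjective)
  rw [t2_iff_isClosed_diagonal, ← hqq.isClosed_preimage]
  have hcollinear :
      IsClosed {p : (Fin 3 → ℂ) × (Fin 3 → ℂ) | ∀ i j, p.1 i * p.2 j = p.1 j * p.2 i} := by
    simp only [ofPred_forall]
    exact isClosed_iInter fun i => isClosed_iInter fun j => isClosed_eq (by fun_prop) (by fun_prop)
  convert hcollinear.preimage (continuous_subtype_val.prodMap continuous_subtype_val)
  ext ⟨v, w⟩
  simp [Projectivization.mk'_eq_mk, Projectivization.mk_eq_mk_iff_mul_eq]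

lemma continuousAt_projectivization_mk {X : Type*} [TopologicalSpace X] {F : X → Fin 3 → ℂ}
    {x : X} (hF : ContinuousAt F x) (hF₀ : ∀ y, F y ≠ 0) :
    ContinuousAt (fun y => (Projectivization.mk ℂ (F y) (hF₀ y) : ℂP²)) x :=
  isQuotientMap_projectivization_mk'.continuous.continuousAt.comp (hF.codRestrict hF₀)

lemma OnePoint.continuous_quadraticOfPair :
    Continuous fun p : OnePoint ℂ × OnePoint ℂ => quadraticOfPair ℂ p.1 p.2 := by
  refine continuous_iff_continuousAt.2 fun ⟨x, y⟩ => ?_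
  obtain ⟨L, hL, hL₀, hLx⟩ := exists_homogCoord_lift_continuousAt x
  obtain ⟨M, hM, hM₀, hMy⟩ := exists_homogCoord_lift_continuousAt y
  have hLM : ContinuousAt (fun p => linearFormProduct (L p.1) (M p.2)) (x, y) :=
    continuous_linearFormProduct.continuousAt.comp
      ((hL.comp continuousAt_fst).prodMk (hM.comp continuousAt_snd))
  refine (continuousAt_projectivization_mk hLM
    fun p => linearFormProduct_ne_zero (hL₀ _) (hM₀ _)).congr ?_
  filter_upwards [hLx.prod_nhds hMy] with p ⟨⟨a, ha⟩, ⟨b, hb⟩⟩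
  refine ((Projectivization.mk_eq_mk_iff' _ _ _ _ _).2 ⟨a * b, ?_⟩).symm
  rw [← linearFormProduct_smul_smul, ha, hb]

lemma OnePoint.continuous_quadraticOfSym2 : Continuous (quadraticOfSym2 ℂ) :=
  isQuotientMap_quot_mk.continuous_iff.2 continuous_quadraticOfPair

/-- The space of unordered pairs of points of the Riemann sphere `OnePoint ℂ`, with the
quotient topology, is homeomorphic to the complex projective plane `ℂP²`. -/
theorem stmt_7 : Nonempty (Sym2 (OnePoint ℂ) ≃ₜ Projectivization ℂ (Fin 3 → ℂ)) :=
  ⟨OnePoint.continuous_quadraticOfSym2.homeoOfEquivCompactToT2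
    (f := .ofBijective _
      ⟨OnePoint.quadraticOfSym2_injective, OnePoint.quadraticOfSym2_surjective⟩)⟩
end

section
/- Let X be a metric space, let i : S² → X be a continuous injective map, fix x₀ ∈ S², and let W_d(i) be the associated min-max width. If W_d(i) equals the diameter of the image i(S²) in X, then for every p ∈ S² there exists q ∈ S² such that dist(i(p), i(q)) = diam(i(S²)). -/
/-- The unit sphere `S²` in three-dimensional Euclidean space. -/
abbrev S2 : Type := Metric.sphere (0 : EuclideanSpace ℝ (Fin 3)) 1

/-- The continuous map `S² → Sym2 S²`, `x ↦ ⟦(φ₁ x, φ₂ x)⟧`. -/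
noncomputable def pairMap (φ₁ φ₂ : C(S2, S2)) : C(S2, Sym2 S2) :=
  ⟨fun x => s(φ₁ x, φ₂ x), continuous_quot_mk.comp (φ₁.continuous.prodMk φ₂.continuous)⟩

/-- The reference map `Φ₀ : S² → Sym2 S²`, `x ↦ ⟦(x, x₀)⟧`. -/
noncomputable def Phi0 (x₀ : S2) : C(S2, Sym2 S2) :=
  pairMap (ContinuousMap.id S2) (ContinuousMap.const S2 x₀)

/-- A sweepout is a pair `(φ₁, φ₂)` of continuous self-maps of `S²` such that
`x ↦ ⟦(φ₁ x, φ₂ x)⟧` is freely homotopic to `Φ₀`. -/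
def IsSweepout (x₀ : S2) (φ₁ φ₂ : C(S2, S2)) : Prop :=
  (pairMap φ₁ φ₂).Homotopic (Phi0 x₀)

/-- The min-max width `W_d(i)`: the infimum over all sweepouts `(φ₁, φ₂)` of
`sup_x dist(i(φ₁ x), i(φ₂ x))`. -/
noncomputable def Wd {X : Type*} [MetricSpace X] (i : C(S2, X)) (x₀ : S2) : ℝ :=
  sInf {r : ℝ | ∃ φ₁ φ₂ : C(S2, S2), IsSweepout x₀ φ₁ φ₂ ∧
    r = ⨆ x : S2, dist (i (φ₁ x)) (i (φ₂ x))}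

/-!
Since `S²` is path connected, sliding the constant point `p` to `x₀` along a path shows that
`(id, const p)` is a sweepout. Hence `diam = W_d(i) ≤ max_x dist(i x, i p)`, and the maximum is
attained at some `q` by compactness; the reverse inequality `dist(i p, i q) ≤ diam` is trivial.
-/

instance : PathConnectedSpace S2 :=
  isPathConnected_iff_pathConnectedSpace.mp <|
    isPathConnected_sphere (by rw [← Module.finrank_eq_rank, finrank_euclideanSpace_fin]; norm_num)
      _ zero_le_one

lemma isSweepout_id_const (x₀ p : S2) :
    IsSweepout x₀ (ContinuousMap.id S2) (ContinuousMap.const S2 p) := by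
  let γ : Path p x₀ := PathConnectedSpace.somePath p x₀
  exact ⟨{ toFun := fun tx => s(tx.2, γ tx.1)
           continuous_toFun :=
             continuous_quot_mk.comp (continuous_snd.prodMk (γ.continuous.comp continuous_fst))
           map_zero_left := fun x => by simp [pairMap]
           map_one_left := fun x => by simp [Phi0, pairMap] }⟩

lemma Wd_le_iSup_of_isSweepout {X : Type*} [MetricSpace X] (i : C(S2, X)) {x₀ : S2}
    {φ₁ φ₂ : C(S2, S2)} (h : IsSweepout x₀ φ₁ φ₂) :
    Wd i x₀ ≤ ⨆ x, dist (i (φ₁ x)) (i (φ₂ x)) := by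
  refine csInf_le ⟨0, ?_⟩ ⟨φ₁, φ₂, h, rfl⟩
  rintro _ ⟨ψ₁, ψ₂, -, rfl⟩
  exact Real.iSup_nonneg fun _ => dist_nonneg

theorem stmt_13_general {X : Type*} [MetricSpace X] (i : C(S2, X))
    (x₀ : S2) (hW : Wd i x₀ = Metric.diam (Set.range i)) :
    ∀ p : S2, ∃ q : S2, dist (i p) (i q) = Metric.diam (Set.range i) := by
  intro p
  obtain ⟨q, -, hq⟩ := isCompact_univ.exists_isMaxOn Set.univ_nonempty
    (map_continuous i |>.dist continuous_const : Continuous fun x => dist (i x) (i p)).continuousOn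
  refine ⟨q, le_antisymm ?_ ?_⟩
  · exact Metric.dist_le_diam_of_mem (isCompact_range i.continuous).isBounded ⟨p, rfl⟩ ⟨q, rfl⟩
  · calc Metric.diam (Set.range i) = Wd i x₀ := hW.symm
      _ ≤ ⨆ x, dist (i x) (i p) := Wd_le_iSup_of_isSweepout i (isSweepout_id_const x₀ p)
      _ ≤ dist (i p) (i q) := ciSup_le fun x => dist_comm (i p) (i q) ▸ hq (Set.mem_univ x)

/-- **Reidemeister-type property (Theorem 1.12 (I)).** If the min-max width of a
continuous injective map `i : S² → X` equals the diameter of its image, then every point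
of the image is an endpoint of a diameter. -/
theorem stmt_13 {X : Type*} [MetricSpace X] (i : C(S2, X)) (hi : Function.Injective i)
    (x₀ : S2) (hW : Wd i x₀ = Metric.diam (Set.range i)) :
    ∀ p : S2, ∃ q : S2, dist (i p) (i q) = Metric.diam (Set.range i) :=
  stmt_13_general i x₀ hW
end

section
/- Let X be a nonempty compact metric space and let f : X → X be a map such that dist(x, f(x)) = diam(X) for every x ∈ X, and such that f(x) is the unique point at maximal distance from x, i.e., for all x, y ∈ X, dist(x, y) = diam(X) implies y = f(x). Then f is continuous. -/
/-- If `X` is a nonempty compact metric space and `f : X → X` satisfies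
`dist(x, f x) = diam X` for every `x`, with `f x` the unique point at maximal distance
from `x`, then `f` is continuous. -/
theorem stmt_15 {X : Type*} [MetricSpace X] [CompactSpace X] [Nonempty X] (f : X → X)
    (h1 : ∀ x : X, dist x (f x) = Metric.diam (Set.univ : Set X))
    (h2 : ∀ x y : X, dist x y = Metric.diam (Set.univ : Set X) → y = f x) :
    Continuous f := by
  rw [continuous_iff_continuousAt]
  intro x
  apply tendsto_nhds_of_unique_mapClusterPt
  intro y hy
  rcases mapClusterPt_iff_ultrafilter.mp hy with ⟨U, hU, hfU⟩
  have hid : Filter.Tendsto id (U : Filter X) (nhds x) := hU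
  have hd : Filter.Tendsto (fun z => dist z (f z)) (U : Filter X) (nhds (dist x y)) :=
    hid.dist hfU
  have hconst : Filter.Tendsto (fun z : X => dist z (f z)) (U : Filter X)
      (nhds (Metric.diam (Set.univ : Set X))) := by
    have : (fun z : X => dist z (f z)) = fun _ => Metric.diam (Set.univ : Set X) :=
      funext h1
    rw [this]; exact tendsto_const_nhds
  have := tendsto_nhds_unique hd hconst
  exact h2 x y this
end
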